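/- With T(ε) = e^{−iπ/4} ℰ(ε) [[1, i e^{−επ}],[i e^{−επ}, 1]] and ℰ(ε) = (2π)^{−1/2} Γ(½+iε) e^{ε(π/2 + i ln h)} (h > 0 fixed, ε real), one has T(ε)·T(−ε) = [[0,1],[1,0]]. -/

import Mathlib

open Complex Real Matrix

/-- ℰ(ε) = (2π)^{−1/2} Γ(½+iε) e^{ε(π/2 + i ln h)}. -/
noncomputable def scrE (h ε : ℝ) : ℂ :=
  (((2 * Real.pi) ^ (-(1 : ℝ) / 2) : ℝ) : ℂ) *
    Complex.Gamma (1 / 2 + ε * Complex.I) *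
    Complex.exp (ε * ((Real.pi / 2 : ℝ) + Complex.I * (Real.log h : ℝ)))

/-- T(ε) = e^{−iπ/4} ℰ(ε) [[1, i e^{−επ}], [i e^{−επ}, 1]]. -/
noncomputable def Tmat (h ε : ℝ) : Matrix (Fin 2) (Fin 2) ℂ :=
  Complex.exp (-(Real.pi / 4 : ℝ) * Complex.I) • scrE h ε •
    !![1, Complex.I * (Real.exp (-ε * Real.pi) : ℝ);
       Complex.I * (Real.exp (-ε * Real.pi) : ℝ), 1]

lemma gamma_lem (ε : ℝ) :
    Complex.Gamma (1/2 + ε*Complex.I) * Complex.Gamma (1/2 - ε*Complex.I)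
      = (Real.pi : ℂ) / (Real.cosh (Real.pi * ε) : ℝ) := by
  have h := Complex.Gamma_mul_Gamma_one_sub (1/2 + ε*Complex.I)
  rw [show (1 : ℂ) - (1/2 + ε*Complex.I) = 1/2 - ε*Complex.I by ring] at h
  rw [h]
  congr 1
  rw [show (Real.pi : ℂ) * (1/2 + ε*Complex.I) = Real.pi/2 + (Real.pi*ε)*Complex.I by
      push_cast; ring,
    Complex.sin_add, Complex.sin_pi_div_two, Complex.cos_pi_div_two, Complex.cos_mul_I,
    Complex.ofReal_cosh]
  push_cast
  ring

lemma scrE_mul (h ε : ℝ) :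
    scrE h ε * scrE h (-ε) * ((Real.exp (-ε*Real.pi) + Real.exp (ε*Real.pi) : ℝ) : ℂ) = 1 := by
  have hc : Real.exp (-ε*Real.pi) + Real.exp (ε*Real.pi) = 2 * Real.cosh (Real.pi * ε) := by
    rw [Real.cosh_eq]; ring_nf
  have hpow : ((2*Real.pi) ^ (-(1:ℝ)/2)) * ((2*Real.pi) ^ (-(1:ℝ)/2)) = (2*Real.pi)⁻¹ := by
    rw [← Real.rpow_add (by positivity), show (-(1:ℝ)/2 + -(1:ℝ)/2) = -1 by ring,
      Real.rpow_neg_one]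
  unfold scrE
  rw [show ((-ε : ℝ) : ℂ) = -(ε:ℂ) by push_cast; ring]
  have hexp : Complex.exp ((ε:ℂ) * ((Real.pi / 2 : ℝ) + Complex.I * (Real.log h : ℝ))) *
      Complex.exp ((-(ε:ℂ)) * ((Real.pi / 2 : ℝ) + Complex.I * (Real.log h : ℝ))) = 1 := by
    rw [← Complex.exp_add]; ring_nf; exact Complex.exp_zero
  have hg : Complex.Gamma (1/2 + ε*Complex.I) * Complex.Gamma (1/2 + (-(ε:ℂ))*Complex.I)
      = (Real.pi : ℂ) / (Real.cosh (Real.pi * ε) : ℝ) := by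
    rw [show (1/2 + (-(ε:ℂ))*Complex.I) = 1/2 - ε*Complex.I by ring]; exact gamma_lem ε
  have hcosh : (Real.cosh (Real.pi * ε) : ℂ) ≠ 0 := by
    exact_mod_cast (Real.cosh_pos (x := Real.pi * ε)).ne'
  have hpi : ((2*Real.pi : ℝ) : ℂ) ≠ 0 := by
    exact_mod_cast (by positivity : (0:ℝ) < 2*Real.pi).ne'
  calc (((2 * Real.pi) ^ (-(1 : ℝ) / 2) : ℝ) : ℂ) * Complex.Gamma (1 / 2 + ε * Complex.I) *
        Complex.exp (↑ε * ((Real.pi / 2 : ℝ) + Complex.I * (Real.log h : ℝ))) *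
      ((((2 * Real.pi) ^ (-(1 : ℝ) / 2) : ℝ) : ℂ) * Complex.Gamma (1 / 2 + (-(ε:ℂ)) * Complex.I) *
        Complex.exp ((-(ε:ℂ)) * ((Real.pi / 2 : ℝ) + Complex.I * (Real.log h : ℝ)))) *
      ((Real.exp (-ε*Real.pi) + Real.exp (ε*Real.pi) : ℝ) : ℂ)
      = ((((2 * Real.pi) ^ (-(1 : ℝ) / 2)) * ((2 * Real.pi) ^ (-(1 : ℝ) / 2)) : ℝ) : ℂ) *
        (Complex.Gamma (1 / 2 + ε * Complex.I) * Complex.Gamma (1 / 2 + (-(ε:ℂ)) * Complex.I)) *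
        (Complex.exp (↑ε * ((Real.pi / 2 : ℝ) + Complex.I * (Real.log h : ℝ))) *
         Complex.exp ((-(ε:ℂ)) * ((Real.pi / 2 : ℝ) + Complex.I * (Real.log h : ℝ)))) *
        ((Real.exp (-ε*Real.pi) + Real.exp (ε*Real.pi) : ℝ) : ℂ) := by push_cast; ring
    _ = 1 := by
        rw [hpow, hg, hexp, hc, mul_one, Complex.ofReal_inv, Complex.ofReal_mul,
          Complex.ofReal_mul, Complex.ofReal_ofNat]
        have hpi2 : (Real.pi : ℂ) ≠ 0 := Complex.ofReal_ne_zero.mpr Real.pi_ne_zero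
        have hcosh2 : Complex.cosh ((Real.pi:ℂ) * (ε:ℂ)) ≠ 0 := by
          rw [← Complex.ofReal_mul, ← Complex.ofReal_cosh]; exact hcosh
        field_simp

lemma exp_sq : Complex.exp (-(Real.pi / 4 : ℝ) * Complex.I) *
    Complex.exp (-(Real.pi / 4 : ℝ) * Complex.I) = -Complex.I := by
  rw [← Complex.exp_add,
    show (-(Real.pi / 4 : ℝ) : ℂ) * Complex.I + (-(Real.pi / 4 : ℝ) : ℂ) * Complex.I
      = (-((Real.pi:ℂ)/2)) * Complex.I by push_cast; ring,
    Complex.exp_mul_I, Complex.cos_neg, Complex.sin_neg, Complex.cos_pi_div_two,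
    Complex.sin_pi_div_two]
  ring

/-- T(ε)·T(−ε) = [[0,1],[1,0]]. -/
theorem stmt8 (h ε : ℝ) (hh : 0 < h) :
    Tmat h ε * Tmat h (-ε) = !![0, 1; 1, 0] := by
  have hab : ((Real.exp (-ε * Real.pi) : ℝ) : ℂ) * ((Real.exp (-(-ε) * Real.pi) : ℝ) : ℂ) = 1 := by
    rw [← Complex.ofReal_mul, ← Real.exp_add]
    norm_num
  have key := scrE_mul h ε
  have key' : scrE h ε * scrE h (-ε) *
      (((Real.exp (-ε*Real.pi) : ℝ) : ℂ) + ((Real.exp (-(-ε)*Real.pi) : ℝ) : ℂ)) = 1 := by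
    rw [show (-(-ε)*Real.pi) = ε*Real.pi by ring, ← Complex.ofReal_add]
    exact key
  ext i j
  fin_cases i <;> fin_cases j <;>
    simp only [Tmat, Matrix.mul_apply, Fin.sum_univ_two, Matrix.smul_apply, smul_eq_mul,
      Matrix.cons_val', Matrix.cons_val_zero, Matrix.cons_val_one, Matrix.head_cons,
      Matrix.empty_val', Matrix.cons_val_fin_one, Matrix.head_fin_const, Matrix.of_apply,
      Fin.zero_eta, Fin.mk_one, Fin.isValue]
  all_goals {
    have hI : Complex.I * Complex.I = -1 := Complex.I_mul_I
    set c := Complex.exp (-(Real.pi / 4 : ℝ) * Complex.I) with hc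
    set A := ((Real.exp (-ε * Real.pi) : ℝ) : ℂ) with hA
    set B := ((Real.exp (-(-ε) * Real.pi) : ℝ) : ℂ) with hB
    set E := scrE h ε * scrE h (-ε) with hE
    first
    | linear_combination (c * c * E * A * B) * hI - (c * c * E) * hab
    | linear_combination Complex.I * (A + B) * E * exp_sq - (A + B) * E * hI + key' }
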